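/- Consider binary Z (instrument), binary D (treatment), and outcome Y, finite-valued, with missingness indicator R^D satisfying R^D ⊥ Y | (D, Z) and Y fully observed. If for each z ∈ {0,1} the 2×K matrix with entries P(D=d, Y=y, R^D=1 | Z=z) has rank 2, and P(R^D=1 | D=d, Z=z) > 0 for all d, z, then P(D=d, Y=y | Z=z) is uniquely determined by the observed-data distribution, and hence the ratio [E(Y|Z=1) − E(Y|Z=0)] / [E(D|Z=1) − E(D|Z=0)] is identified (assuming the denominator is nonzero). -/
import Mathlib


open Finset
open scoped Classical

/-- The probability of the event `A` under the probability mass function `p`. -/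
noncomputable def pr {Ω : Type*} [Fintype Ω] (p : Ω → ℝ) (A : Ω → Prop) : ℝ :=
  ∑ ω, if A ω then p ω else 0


section IVHelpers
variable {Ω : Type*} [Fintype Ω]

lemma pr_congr (p : Ω → ℝ) {A B : Ω → Prop} (h : ∀ ω, A ω ↔ B ω) :
    pr p A = pr p B :=
  Finset.sum_congr rfl fun ω _ => by simp [pr, h ω]

lemma pr_split (p : Ω → ℝ) (A : Ω → Prop) (R : Ω → Bool) :
    pr p A = pr p (fun ω => A ω ∧ R ω = true) + pr p (fun ω => A ω ∧ R ω = false) := by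
  unfold pr
  rw [← Finset.sum_add_distrib]
  refine Finset.sum_congr rfl fun ω _ => ?_
  by_cases h : A ω <;> cases hR : R ω <;> simp [h, hR]

lemma pr_sum_bool (p : Ω → ℝ) (A : Ω → Prop) (D : Ω → Bool) :
    pr p A = pr p (fun ω => D ω = true ∧ A ω) + pr p (fun ω => D ω = false ∧ A ω) := by
  unfold pr
  rw [← Finset.sum_add_distrib]
  refine Finset.sum_congr rfl fun ω _ => ?_
  by_cases h : A ω <;> cases hD : D ω <;> simp [h, hD]

lemma pr_fiber (p : Ω → ℝ) (A : Ω → Prop) (Y : Ω → ℝ) (S : Finset ℝ)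
    (hS : ∀ ω, Y ω ∈ S) :
    pr p A = ∑ y ∈ S, pr p (fun ω => A ω ∧ Y ω = y) := by
  unfold pr
  rw [Finset.sum_comm]
  refine Finset.sum_congr rfl fun ω _ => ?_
  by_cases h : A ω
  · simp only [h, true_and]
    rw [Finset.sum_ite_eq S (Y ω) (fun _ => p ω)]
    simp [hS ω]
  · simp [h]

lemma pr_weight (p : Ω → ℝ) (Zc : Ω → Prop) (Y : Ω → ℝ) (S : Finset ℝ)
    (hS : ∀ ω, Y ω ∈ S) :
    (∑ ω, if Zc ω then p ω * Y ω else 0)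
      = ∑ y ∈ S, y * pr p (fun ω => Y ω = y ∧ Zc ω) := by
  unfold pr
  simp_rw [Finset.mul_sum]
  rw [Finset.sum_comm]
  refine Finset.sum_congr rfl fun ω _ => ?_
  by_cases h : Zc ω
  · simp only [h, and_true]
    have h2 : ∀ y ∈ S, y * (if Y ω = y then p ω else 0) = if Y ω = y then y * p ω else 0 :=
      fun y _ => by split <;> simp
    rw [Finset.sum_congr rfl h2, Finset.sum_ite_eq S (Y ω) (fun y => y * p ω)]
    simp [hS ω, mul_comm]
  · simp [h]

lemma stepA (p : Ω → ℝ) (D Z RD : Ω → Bool) (Y : Ω → ℝ)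
    (hCI : ∀ d z y r,
      pr p (fun ω => D ω = d ∧ Z ω = z) *
          pr p (fun ω => D ω = d ∧ Z ω = z ∧ Y ω = y ∧ RD ω = r) =
        pr p (fun ω => D ω = d ∧ Z ω = z ∧ Y ω = y) *
          pr p (fun ω => D ω = d ∧ Z ω = z ∧ RD ω = r))
    (hpos : ∀ d z, 0 < pr p (fun ω => D ω = d ∧ Z ω = z ∧ RD ω = true))
    (d z : Bool) (y : ℝ) :
    pr p (fun ω => D ω = d ∧ Z ω = z ∧ Y ω = y)
      = (pr p (fun ω => D ω = d ∧ Z ω = z) /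
          pr p (fun ω => D ω = d ∧ Z ω = z ∧ RD ω = true))
        * pr p (fun ω => D ω = d ∧ Z ω = z ∧ Y ω = y ∧ RD ω = true) := by
  have h := hCI d z y true
  have hR := (hpos d z).ne'
  field_simp
  linarith [h]

lemma balance (p : Ω → ℝ) (D Z RD : Ω → Bool) (Y : Ω → ℝ)
    (hCI : ∀ d z y r,
      pr p (fun ω => D ω = d ∧ Z ω = z) *
          pr p (fun ω => D ω = d ∧ Z ω = z ∧ Y ω = y ∧ RD ω = r) =
        pr p (fun ω => D ω = d ∧ Z ω = z ∧ Y ω = y) *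
          pr p (fun ω => D ω = d ∧ Z ω = z ∧ RD ω = r))
    (hpos : ∀ d z, 0 < pr p (fun ω => D ω = d ∧ Z ω = z ∧ RD ω = true))
    (d z : Bool) (y : ℝ) :
    (pr p (fun ω => D ω = d ∧ Z ω = z) /
        pr p (fun ω => D ω = d ∧ Z ω = z ∧ RD ω = true))
      * pr p (fun ω => D ω = d ∧ Y ω = y ∧ RD ω = true ∧ Z ω = z)
    = pr p (fun ω => D ω = d ∧ Y ω = y ∧ RD ω = true ∧ Z ω = z)
      + pr p (fun ω => D ω = d ∧ Y ω = y ∧ RD ω = false ∧ Z ω = z) := by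
  have h1 : pr p (fun ω => D ω = d ∧ Y ω = y ∧ RD ω = true ∧ Z ω = z)
      = pr p (fun ω => D ω = d ∧ Z ω = z ∧ Y ω = y ∧ RD ω = true) :=
    pr_congr p fun ω => by tauto
  have h0 : pr p (fun ω => D ω = d ∧ Y ω = y ∧ RD ω = false ∧ Z ω = z)
      = pr p (fun ω => (D ω = d ∧ Z ω = z ∧ Y ω = y) ∧ RD ω = false) :=
    pr_congr p fun ω => by tauto
  have h1' : pr p (fun ω => D ω = d ∧ Z ω = z ∧ Y ω = y ∧ RD ω = true)
      = pr p (fun ω => (D ω = d ∧ Z ω = z ∧ Y ω = y) ∧ RD ω = true) :=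
    pr_congr p fun ω => by tauto
  rw [h1, h0, ← stepA p D Z RD Y hCI hpos d z y, h1',
    pr_split p (fun ω => D ω = d ∧ Z ω = z ∧ Y ω = y) RD]

end IVHelpers

/-- Instrumental-variable analogue of Theorem 1 (MNAR mechanism I): binary
instrument `Z`, binary treatment `D` with missingness indicator `R^D` such that
`R^D ⊥ Y | (D, Z)` and `Y` fully observed.  If for each `z` the matrix with
entries `P(D=d, Y=y, R^D=1 | Z=z)` has rank 2 and `P(R^D=1 | D=d, Z=z) > 0`,
then `P(D=d, Y=y | Z=z)` is uniquely determined by the observed-data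
distribution, and hence the Wald ratio
`[E(Y|Z=1) − E(Y|Z=0)] / [E(D|Z=1) − E(D|Z=0)]` is identified. -/
theorem iv_mnar_identification
    {Ω Ω' : Type*} [Fintype Ω] [Fintype Ω']
    (p : Ω → ℝ) (hp0 : ∀ ω, 0 ≤ p ω) (hp1 : ∑ ω, p ω = 1)
    (Z D : Ω → Bool) (Y : Ω → ℝ) (RD : Ω → Bool)
    (hZpos : ∀ z, 0 < pr p (fun ω => Z ω = z))
    -- conditional independence  R^D ⊥ Y | (D, Z)
    (hCI : ∀ d z y r,
      pr p (fun ω => D ω = d ∧ Z ω = z) *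
          pr p (fun ω => D ω = d ∧ Z ω = z ∧ Y ω = y ∧ RD ω = r) =
        pr p (fun ω => D ω = d ∧ Z ω = z ∧ Y ω = y) *
          pr p (fun ω => D ω = d ∧ Z ω = z ∧ RD ω = r))
    -- positivity:  P(R^D=1, D=d, Z=z) > 0
    (hpos : ∀ d z, 0 < pr p (fun ω => D ω = d ∧ Z ω = z ∧ RD ω = true))
    -- rank-2 condition for each z
    (hrank : ∀ z, ∀ v : Bool → ℝ,
      (∀ y : ℝ, ∑ d,
        pr p (fun ω => D ω = d ∧ Y ω = y ∧ RD ω = true ∧ Z ω = z) * v d = 0) →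
      v = 0)
    -- a second model satisfying the same assumptions
    (q : Ω' → ℝ) (hq0 : ∀ ω, 0 ≤ q ω) (hq1 : ∑ ω, q ω = 1)
    (Z' D' : Ω' → Bool) (Y' : Ω' → ℝ) (RD' : Ω' → Bool)
    (hZpos' : ∀ z, 0 < pr q (fun ω => Z' ω = z))
    (hCI' : ∀ d z y r,
      pr q (fun ω => D' ω = d ∧ Z' ω = z) *
          pr q (fun ω => D' ω = d ∧ Z' ω = z ∧ Y' ω = y ∧ RD' ω = r) =
        pr q (fun ω => D' ω = d ∧ Z' ω = z ∧ Y' ω = y) *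
          pr q (fun ω => D' ω = d ∧ Z' ω = z ∧ RD' ω = r))
    (hpos' : ∀ d z, 0 < pr q (fun ω => D' ω = d ∧ Z' ω = z ∧ RD' ω = true))
    -- with the same observed-data distribution (conditional on Z)
    (hobs1 : ∀ d z (y : ℝ),
      pr p (fun ω => D ω = d ∧ Y ω = y ∧ RD ω = true ∧ Z ω = z) /
          pr p (fun ω => Z ω = z) =
        pr q (fun ω => D' ω = d ∧ Y' ω = y ∧ RD' ω = true ∧ Z' ω = z) /
          pr q (fun ω => Z' ω = z))
    (hobs0 : ∀ z (y : ℝ),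
      pr p (fun ω => Y ω = y ∧ RD ω = false ∧ Z ω = z) /
          pr p (fun ω => Z ω = z) =
        pr q (fun ω => Y' ω = y ∧ RD' ω = false ∧ Z' ω = z) /
          pr q (fun ω => Z' ω = z)) :
    -- the conditional joint law of (D, Y) given Z is identified
    (∀ d z (y : ℝ),
      pr p (fun ω => D ω = d ∧ Y ω = y ∧ Z ω = z) / pr p (fun ω => Z ω = z) =
        pr q (fun ω => D' ω = d ∧ Y' ω = y ∧ Z' ω = z) /
          pr q (fun ω => Z' ω = z)) ∧
    -- hence the Wald ratio is identified (when its denominator is nonzero)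
    ((∑ ω, if D ω = true ∧ Z ω = true then p ω else 0) / pr p (fun ω => Z ω = true) -
        (∑ ω, if D ω = true ∧ Z ω = false then p ω else 0) /
          pr p (fun ω => Z ω = false) ≠ 0 →
      ((∑ ω, if Z ω = true then p ω * Y ω else 0) / pr p (fun ω => Z ω = true) -
          (∑ ω, if Z ω = false then p ω * Y ω else 0) / pr p (fun ω => Z ω = false)) /
        ((∑ ω, if D ω = true ∧ Z ω = true then p ω else 0) /
            pr p (fun ω => Z ω = true) -
          (∑ ω, if D ω = true ∧ Z ω = false then p ω else 0) /
            pr p (fun ω => Z ω = false)) =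
      ((∑ ω, if Z' ω = true then q ω * Y' ω else 0) / pr q (fun ω => Z' ω = true) -
          (∑ ω, if Z' ω = false then q ω * Y' ω else 0) /
            pr q (fun ω => Z' ω = false)) /
        ((∑ ω, if D' ω = true ∧ Z' ω = true then q ω else 0) /
            pr q (fun ω => Z' ω = true) -
          (∑ ω, if D' ω = true ∧ Z' ω = false then q ω else 0) /
            pr q (fun ω => Z' ω = false))) := by
    -- normalizers
  set lamp : Bool → Bool → ℝ := fun z d =>
    pr p (fun ω => D ω = d ∧ Z ω = z) /
      pr p (fun ω => D ω = d ∧ Z ω = z ∧ RD ω = true) with hlampdef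
  set lamq : Bool → Bool → ℝ := fun z d =>
    pr q (fun ω => D' ω = d ∧ Z' ω = z) /
      pr q (fun ω => D' ω = d ∧ Z' ω = z ∧ RD' ω = true) with hlamqdef
  have hc : ∀ z, pr p (fun ω => Z ω = z) ≠ 0 := fun z => (hZpos z).ne'
  have hc' : ∀ z, pr q (fun ω => Z' ω = z) ≠ 0 := fun z => (hZpos' z).ne'
  -- the key lambda equality
  have hlam : ∀ z d, lamp z d = lamq z d := by
    intro z d
    have hv : (fun d => lamp z d - lamq z d) = 0 := by
      apply hrank z
      intro y
      rw [Fintype.sum_bool]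
      have e1t := balance p D Z RD Y hCI hpos true z y
      have e1f := balance p D Z RD Y hCI hpos false z y
      have e2t := balance q D' Z' RD' Y' hCI' hpos' true z y
      have e2f := balance q D' Z' RD' Y' hCI' hpos' false z y
      have At : pr p (fun ω => D ω = true ∧ Y ω = y ∧ RD ω = true ∧ Z ω = z) *
            pr q (fun ω => Z' ω = z)
          = pr q (fun ω => D' ω = true ∧ Y' ω = y ∧ RD' ω = true ∧ Z' ω = z) *
            pr p (fun ω => Z ω = z) :=
        (div_eq_div_iff (hc z) (hc' z)).mp (hobs1 true z y)
      have Af : pr p (fun ω => D ω = false ∧ Y ω = y ∧ RD ω = true ∧ Z ω = z) *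
            pr q (fun ω => Z' ω = z)
          = pr q (fun ω => D' ω = false ∧ Y' ω = y ∧ RD' ω = true ∧ Z' ω = z) *
            pr p (fun ω => Z ω = z) :=
        (div_eq_div_iff (hc z) (hc' z)).mp (hobs1 false z y)
      have G0 : pr p (fun ω => Y ω = y ∧ RD ω = false ∧ Z ω = z) *
            pr q (fun ω => Z' ω = z)
          = pr q (fun ω => Y' ω = y ∧ RD' ω = false ∧ Z' ω = z) *
            pr p (fun ω => Z ω = z) :=
        (div_eq_div_iff (hc z) (hc' z)).mp (hobs0 z y)
      have Gp : pr p (fun ω => Y ω = y ∧ RD ω = false ∧ Z ω = z)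
          = pr p (fun ω => D ω = true ∧ Y ω = y ∧ RD ω = false ∧ Z ω = z)
            + pr p (fun ω => D ω = false ∧ Y ω = y ∧ RD ω = false ∧ Z ω = z) :=
        pr_sum_bool p _ D
      have Gq : pr q (fun ω => Y' ω = y ∧ RD' ω = false ∧ Z' ω = z)
          = pr q (fun ω => D' ω = true ∧ Y' ω = y ∧ RD' ω = false ∧ Z' ω = z)
            + pr q (fun ω => D' ω = false ∧ Y' ω = y ∧ RD' ω = false ∧ Z' ω = z) :=
        pr_sum_bool q _ D'
      rw [Gp] at G0
      rw [Gq] at G0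
      apply mul_left_cancel₀ (hc' z)
      simp only [hlampdef, hlamqdef]
      linear_combination pr q (fun ω => Z' ω = z) * e1t
        + pr q (fun ω => Z' ω = z) * e1f
        - lamq z true * At - lamq z false * Af
        - pr p (fun ω => Z ω = z) * e2t - pr p (fun ω => Z ω = z) * e2f
        + At + Af + G0
    have := congrFun hv d
    have h0 : lamp z d - lamq z d = 0 := this
    linarith
  -- Part 1: identification of the joint conditional law
  have part1 : ∀ d z (y : ℝ),
      pr p (fun ω => D ω = d ∧ Y ω = y ∧ Z ω = z) / pr p (fun ω => Z ω = z) =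
        pr q (fun ω => D' ω = d ∧ Y' ω = y ∧ Z' ω = z) /
          pr q (fun ω => Z' ω = z) := by
    intro d z y
    have r1 : pr p (fun ω => D ω = d ∧ Y ω = y ∧ Z ω = z)
        = pr p (fun ω => D ω = d ∧ Z ω = z ∧ Y ω = y) := pr_congr p fun ω => by tauto
    have r1' : pr q (fun ω => D' ω = d ∧ Y' ω = y ∧ Z' ω = z)
        = pr q (fun ω => D' ω = d ∧ Z' ω = z ∧ Y' ω = y) := pr_congr q fun ω => by tauto
    have r2 : pr p (fun ω => D ω = d ∧ Z ω = z ∧ Y ω = y ∧ RD ω = true)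
        = pr p (fun ω => D ω = d ∧ Y ω = y ∧ RD ω = true ∧ Z ω = z) :=
      pr_congr p fun ω => by tauto
    have r2' : pr q (fun ω => D' ω = d ∧ Z' ω = z ∧ Y' ω = y ∧ RD' ω = true)
        = pr q (fun ω => D' ω = d ∧ Y' ω = y ∧ RD' ω = true ∧ Z' ω = z) :=
      pr_congr q fun ω => by tauto
    rw [r1, r1', stepA p D Z RD Y hCI hpos d z y, stepA q D' Z' RD' Y' hCI' hpos' d z y,
      r2, r2', mul_div_assoc, mul_div_assoc, hobs1 d z y]
    have := hlam z d
    simp only [hlampdef, hlamqdef] at this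
    rw [this]
  refine ⟨part1, ?_⟩
  -- Part 2: the Wald ratio
  classical
  set S : Finset ℝ := Finset.image Y Finset.univ ∪ Finset.image Y' Finset.univ with hSdef
  have hS : ∀ ω, Y ω ∈ S := fun ω => Finset.mem_union_left _ (Finset.mem_image_of_mem Y (Finset.mem_univ ω))
  have hS' : ∀ ω, Y' ω ∈ S := fun ω => Finset.mem_union_right _ (Finset.mem_image_of_mem Y' (Finset.mem_univ ω))
  have hD2 : ∀ z, (∑ ω, if D ω = true ∧ Z ω = z then p ω else 0) / pr p (fun ω => Z ω = z)
      = (∑ ω, if D' ω = true ∧ Z' ω = z then q ω else 0) / pr q (fun ω => Z' ω = z) := by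
    intro z
    have l1 : (∑ ω, if D ω = true ∧ Z ω = z then p ω else 0)
        = pr p (fun ω => D ω = true ∧ Z ω = z) := by
      unfold pr
      exact Finset.sum_congr rfl fun ω _ => by
        by_cases h : D ω = true ∧ Z ω = z <;> simp [h]
    have l2 : (∑ ω, if D' ω = true ∧ Z' ω = z then q ω else 0)
        = pr q (fun ω => D' ω = true ∧ Z' ω = z) := by
      unfold pr
      exact Finset.sum_congr rfl fun ω _ => by
        by_cases h : D' ω = true ∧ Z' ω = z <;> simp [h]
    rw [l1, l2, pr_fiber p _ Y S hS, pr_fiber q _ Y' S hS',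
      Finset.sum_div, Finset.sum_div]
    refine Finset.sum_congr rfl fun y _ => ?_
    have c1 : pr p (fun ω => (D ω = true ∧ Z ω = z) ∧ Y ω = y)
        = pr p (fun ω => D ω = true ∧ Y ω = y ∧ Z ω = z) := pr_congr p fun ω => by tauto
    have c2 : pr q (fun ω => (D' ω = true ∧ Z' ω = z) ∧ Y' ω = y)
        = pr q (fun ω => D' ω = true ∧ Y' ω = y ∧ Z' ω = z) := pr_congr q fun ω => by tauto
    rw [c1, c2]
    exact part1 true z y
  have hY2 : ∀ z, (∑ ω, if Z ω = z then p ω * Y ω else 0) / pr p (fun ω => Z ω = z)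
      = (∑ ω, if Z' ω = z then q ω * Y' ω else 0) / pr q (fun ω => Z' ω = z) := by
    intro z
    have w1 : (∑ ω, if Z ω = z then p ω * Y ω else 0)
        = ∑ y ∈ S, y * pr p (fun ω => Y ω = y ∧ Z ω = z) := by
      refine Eq.trans ?_ (pr_weight p (fun ω => Z ω = z) Y S hS)
      exact Finset.sum_congr rfl fun ω _ => by by_cases h : Z ω = z <;> simp [h]
    have w2 : (∑ ω, if Z' ω = z then q ω * Y' ω else 0)
        = ∑ y ∈ S, y * pr q (fun ω => Y' ω = y ∧ Z' ω = z) := by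
      refine Eq.trans ?_ (pr_weight q (fun ω => Z' ω = z) Y' S hS')
      exact Finset.sum_congr rfl fun ω _ => by by_cases h : Z' ω = z <;> simp [h]
    rw [w1, w2, Finset.sum_div, Finset.sum_div]
    refine Finset.sum_congr rfl fun y _ => ?_
    rw [mul_div_assoc, mul_div_assoc]
    congr 1
    have c1 : pr p (fun ω => Y ω = y ∧ Z ω = z)
        = pr p (fun ω => D ω = true ∧ Y ω = y ∧ Z ω = z)
          + pr p (fun ω => D ω = false ∧ Y ω = y ∧ Z ω = z) := by
      rw [pr_sum_bool p (fun ω => Y ω = y ∧ Z ω = z) D]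
    have c2 : pr q (fun ω => Y' ω = y ∧ Z' ω = z)
        = pr q (fun ω => D' ω = true ∧ Y' ω = y ∧ Z' ω = z)
          + pr q (fun ω => D' ω = false ∧ Y' ω = y ∧ Z' ω = z) := by
      rw [pr_sum_bool q (fun ω => Y' ω = y ∧ Z' ω = z) D']
    rw [c1, c2, add_div, add_div, part1 true z y, part1 false z y]
  intro _
  rw [hD2 true, hD2 false, hY2 true, hY2 false]
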